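/- arXiv:2512.18879 — 2 statements merged into one kernel-verified Lean document; each statement's English description precedes it below -/
import Mathlib

section
/- Discrete contactomorphism property of the discrete PMP update (Theorem: the type-II generating-function update preserves the discrete contact form): Let n, m be natural numbers, F : ℝⁿ × ℝᵐ → ℝⁿ and L_d : ℝⁿ × ℝᵐ → ℝ be differentiable, let Ω ⊆ ℝⁿ × ℝⁿ × ℝ be open (coordinates (x, p, z)), and let υ : Ω → ℝᵐ be a differentiable control selection satisfying the discrete stationarity condition ∇_u L_d(x, υ(x,p,z)) = (D_u F(x, υ(x,p,z)))ᵀ p for all (x,p,z) ∈ Ω (i.e. ∂_u H̃_d = 0 for the discrete Hamiltonian H̃_d(x,p,u) = ⟨p, F(x,u)⟩ − L_d(x,u)). Define on Ω the maps X(x,p,z) := F(x, υ(x,p,z)), Z(x,p,z) := z + L_d(x, υ(x,p,z)), and the updated costate π(x,p,z) := (D_x F(x, υ(x,p,z)))ᵀ p − ∇_x L_d(x, υ(x,p,z)). Then for every (x,p,z) ∈ Ω and every direction v = (v_x, v_p, v_z) ∈ ℝⁿ × ℝⁿ × ℝ, the Fréchet derivatives satisfy DZ(x,p,z)[v] − ⟨p,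 DX(x,p,z)[v]⟩ = v_z − ⟨π(x,p,z), v_x⟩. In other words, the discrete PMP update pulls back the contact 1-form dz_{k+1} − ⟨p_{k+1}, dx_{k+1}⟩ exactly to dz_k − ⟨p_k, dx_k⟩, so it is a strict discrete contactomorphism. -/
open scoped RealInnerProductSpace
noncomputable section

/-!
Differentiating `X = F(x, υ)` and `Z = z + L_d(x, υ)` by the chain rule splits each derivative
into an `x`-part and a `u`-part applied to `Dυ v`. Stationarity says exactly that the two
`u`-parts, `D_u L_d (Dυ v)` and `⟪p, D_u F (Dυ v)⟫`, agree, so they cancel in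
`dZ − ⟪p, dX⟫`; the `x`-parts combine, via the adjoint and the gradient, into `⟪π, v_x⟫`.
-/

theorem fderiv_comp_prodMk_apply {𝕜 W E U G : Type*} [NontriviallyNormedField 𝕜]
    [NormedAddCommGroup W] [NormedSpace 𝕜 W] [NormedAddCommGroup E] [NormedSpace 𝕜 E]
    [NormedAddCommGroup U] [NormedSpace 𝕜 U] [NormedAddCommGroup G] [NormedSpace 𝕜 G]
    {f : E × U → G} {g : W → E} {h : W → U} {w : W}
    (hf : DifferentiableAt 𝕜 f (g w, h w)) (hg : DifferentiableAt 𝕜 g w)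
    (hh : DifferentiableAt 𝕜 h w) (v : W) :
    fderiv 𝕜 (fun w' => f (g w', h w')) w v
      = fderiv 𝕜 (fun x => f (x, h w)) (g w) (fderiv 𝕜 g w v)
        + fderiv 𝕜 (fun u => f (g w, u)) (h w) (fderiv 𝕜 h w v) := by
  have hcomp : HasFDerivAt (fun w' => f (g w', h w')) _ w :=
    hf.hasFDerivAt.comp w (hg.hasFDerivAt.prodMk hh.hasFDerivAt)
  have hx : HasFDerivAt (fun x => f (x, h w)) _ (g w) :=
    hf.hasFDerivAt.comp (g w) (hasFDerivAt_prodMk_left (g w) (h w))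
  have hu : HasFDerivAt (fun u => f (g w, u)) _ (h w) :=
    hf.hasFDerivAt.comp (h w) (hasFDerivAt_prodMk_right (g w) (h w))
  rw [hcomp.fderiv, hx.fderiv, hu.fderiv]
  simp only [ContinuousLinearMap.comp_apply, ContinuousLinearMap.prod_apply,
    ContinuousLinearMap.inl_apply, ContinuousLinearMap.inr_apply, ← map_add, Prod.mk_add_mk,
    add_zero, zero_add]

theorem fderiv_apply_eq_inner_of_gradient_eq_adjoint {E U : Type*}
    [NormedAddCommGroup E] [InnerProductSpace ℝ E] [CompleteSpace E]
    [NormedAddCommGroup U] [InnerProductSpace ℝ U] [CompleteSpace U]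
    {L : U → ℝ} {F : U → E} {u : U} {p : E}
    (h : gradient L u = ContinuousLinearMap.adjoint (fderiv ℝ F u) p) (δ : U) :
    fderiv ℝ L u δ = ⟪p, fderiv ℝ F u δ⟫ := by
  rw [← inner_gradient_left, h, ContinuousLinearMap.adjoint_inner_left]

theorem fderiv_contactForm_pullback {E U : Type*}
    [NormedAddCommGroup E] [InnerProductSpace ℝ E] [CompleteSpace E]
    [NormedAddCommGroup U] [InnerProductSpace ℝ U] [CompleteSpace U]
    {F : E × U → E} {Ld : E × U → ℝ} {υ : E × E × ℝ → U} {w : E × E × ℝ}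
    (hF : DifferentiableAt ℝ F (w.1, υ w)) (hLd : DifferentiableAt ℝ Ld (w.1, υ w))
    (hυ : DifferentiableAt ℝ υ w)
    (hstat : gradient (fun u => Ld (w.1, u)) (υ w)
      = ContinuousLinearMap.adjoint (fderiv ℝ (fun u => F (w.1, u)) (υ w)) w.2.1)
    (v : E × E × ℝ) :
    fderiv ℝ (fun w' => w'.2.2 + Ld (w'.1, υ w')) w v
        - ⟪w.2.1, fderiv ℝ (fun w' => F (w'.1, υ w')) w v⟫
      = v.2.2
        - ⟪ContinuousLinearMap.adjoint (fderiv ℝ (fun x => F (x, υ w)) w.1) w.2.1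
            - gradient (fun x => Ld (x, υ w)) w.1, v.1⟫ := by
  have hfst : DifferentiableAt ℝ (fun w' : E × E × ℝ => w'.1) w := differentiableAt_fst
  have hz : HasFDerivAt (fun w' : E × E × ℝ => w'.2.2)
      ((ContinuousLinearMap.snd ℝ E ℝ).comp (ContinuousLinearMap.snd ℝ E (E × ℝ))) w :=
    hasFDerivAt_snd.comp w hasFDerivAt_snd
  have hL : DifferentiableAt ℝ (fun w' => Ld (w'.1, υ w')) w := hLd.comp w (hfst.prodMk hυ)
  have hZ : fderiv ℝ (fun w' => w'.2.2 + Ld (w'.1, υ w')) w v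
      = v.2.2 + (fderiv ℝ (fun x => Ld (x, υ w)) w.1 v.1
        + fderiv ℝ (fun u => Ld (w.1, u)) (υ w) (fderiv ℝ υ w v)) := by
    rw [fderiv_fun_add hz.differentiableAt hL, add_apply, hz.fderiv,
      fderiv_comp_prodMk_apply hLd hfst hυ, fderiv_fst]
    rfl
  have hX : fderiv ℝ (fun w' => F (w'.1, υ w')) w v
      = fderiv ℝ (fun x => F (x, υ w)) w.1 v.1
        + fderiv ℝ (fun u => F (w.1, u)) (υ w) (fderiv ℝ υ w v) := by
    rw [fderiv_comp_prodMk_apply hF hfst hυ, fderiv_fst]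
    rfl
  rw [hZ, hX, fderiv_apply_eq_inner_of_gradient_eq_adjoint hstat]
  simp only [inner_add_right, inner_sub_left, inner_gradient_left,
    ContinuousLinearMap.adjoint_inner_left]
  ring

theorem discrete_PMP_update_is_contactomorphism_general {n m : ℕ}
    (F : EuclideanSpace ℝ (Fin n) × EuclideanSpace ℝ (Fin m) → EuclideanSpace ℝ (Fin n))
    (Ld : EuclideanSpace ℝ (Fin n) × EuclideanSpace ℝ (Fin m) → ℝ)
    (hF : Differentiable ℝ F) (hLd : Differentiable ℝ Ld)
    (Ω : Set (EuclideanSpace ℝ (Fin n) × EuclideanSpace ℝ (Fin n) × ℝ))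
    (υ : EuclideanSpace ℝ (Fin n) × EuclideanSpace ℝ (Fin n) × ℝ → EuclideanSpace ℝ (Fin m))
    (hυ : ∀ w ∈ Ω, DifferentiableAt ℝ υ w)
    -- discrete stationarity: ∇ᵤ L_d(x, υ) = (DᵤF(x, υ))ᵀ p on Ω
    (hstat : ∀ w ∈ Ω,
      gradient (fun v => Ld (w.1, v)) (υ w)
        = (ContinuousLinearMap.adjoint
            (fderiv ℝ (fun v => F (w.1, v)) (υ w))) w.2.1) :
    -- X(x,p,z) = F(x, υ(x,p,z)),  Z(x,p,z) = z + L_d(x, υ(x,p,z)),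
    -- π(x,p,z) = (DₓF(x,υ))ᵀ p − ∇ₓL_d(x,υ)
    ∀ w ∈ Ω, ∀ v : EuclideanSpace ℝ (Fin n) × EuclideanSpace ℝ (Fin n) × ℝ,
      fderiv ℝ (fun w' => w'.2.2 + Ld (w'.1, υ w')) w v
          - ⟪w.2.1, fderiv ℝ (fun w' => F (w'.1, υ w')) w v⟫
        = v.2.2
          - ⟪(ContinuousLinearMap.adjoint
                (fderiv ℝ (fun x => F (x, υ w)) w.1)) w.2.1
              - gradient (fun x => Ld (x, υ w)) w.1, v.1⟫ := fun w hw =>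
  fderiv_contactForm_pullback (hF _) (hLd _) (hυ w hw) (hstat w hw)

/-- Discrete contactomorphism property of the discrete PMP update: the type-II
generating-function update pulls back the contact 1-form
`dz_{k+1} − ⟨p_{k+1}, dx_{k+1}⟩` exactly to `dz_k − ⟨p_k, dx_k⟩`. -/
theorem discrete_PMP_update_is_contactomorphism {n m : ℕ}
    (F : EuclideanSpace ℝ (Fin n) × EuclideanSpace ℝ (Fin m) → EuclideanSpace ℝ (Fin n))
    (Ld : EuclideanSpace ℝ (Fin n) × EuclideanSpace ℝ (Fin m) → ℝ)
    (hF : Differentiable ℝ F) (hLd : Differentiable ℝ Ld)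
    (Ω : Set (EuclideanSpace ℝ (Fin n) × EuclideanSpace ℝ (Fin n) × ℝ)) (hΩ : IsOpen Ω)
    (υ : EuclideanSpace ℝ (Fin n) × EuclideanSpace ℝ (Fin n) × ℝ → EuclideanSpace ℝ (Fin m))
    (hυ : ∀ w ∈ Ω, DifferentiableAt ℝ υ w)
    -- discrete stationarity: ∇ᵤ L_d(x, υ) = (DᵤF(x, υ))ᵀ p on Ω
    (hstat : ∀ w ∈ Ω,
      gradient (fun v => Ld (w.1, v)) (υ w)
        = (ContinuousLinearMap.adjoint
            (fderiv ℝ (fun v => F (w.1, v)) (υ w))) w.2.1) :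
    -- X(x,p,z) = F(x, υ(x,p,z)),  Z(x,p,z) = z + L_d(x, υ(x,p,z)),
    -- π(x,p,z) = (DₓF(x,υ))ᵀ p − ∇ₓL_d(x,υ)
    ∀ w ∈ Ω, ∀ v : EuclideanSpace ℝ (Fin n) × EuclideanSpace ℝ (Fin n) × ℝ,
      fderiv ℝ (fun w' => w'.2.2 + Ld (w'.1, υ w')) w v
          - ⟪w.2.1, fderiv ℝ (fun w' => F (w'.1, υ w')) w v⟫
        = v.2.2
          - ⟪(ContinuousLinearMap.adjoint
                (fderiv ℝ (fun x => F (x, υ w)) w.1)) w.2.1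
              - gradient (fun x => Ld (x, υ w)) w.1, v.1⟫ :=
  discrete_PMP_update_is_contactomorphism_general F Ld hF hLd Ω υ hυ hstat
end
end

section
/- The PMP extended flow preserves the contact form when the Hamiltonian is independent of the cost variable: Let n ≥ 1 and let H : ℝⁿ × ℝⁿ → ℝ be twice continuously differentiable. Define the vector field X on ℝⁿ × ℝⁿ × ℝ by X(x,p,z) := (∇_p H(x,p), −∇_x H(x,p), ⟨p, ∇_p H(x,p)⟩ − H(x,p)). Let φ : ℝ × (ℝⁿ × ℝⁿ × ℝ) → ℝⁿ × ℝⁿ × ℝ be twice continuously differentiable with φ(0, w) = w and ∂_t φ(t, w) = X(φ(t, w)) for all (t, w). Write φ(t,w) = (x_t(w), p_t(w), z_t(w)). Then for every t ∈ ℝ, every w = (x, p, z), and every direction v = (v_x, v_p, v_z), one has D z_t(w)[v] − ⟨p_t(w), D x_t(w)[v]⟩ = v_z − ⟨p, v_x⟩; that is, the pullback of the contact form θ = dz − ⟨p, dx⟩ under the time-t flow map equals θ. -/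
/-!
By the symmetry of second derivatives, the variation `J = D φ_t(w) v` solves the linearised
equation `J' = D(X ∘ φ_t)(w) v`. Differentiating the identity `X_z = ⟨p, X_x⟩ − H(x, p)` along
`φ_t` and using `X_x = ∇ₚH`, the `∇ₚH`-terms cancel and `θ(J') = ⟨X_p, J_x⟩ = ⟨ṗ, J_x⟩`. This is
exactly the term produced by the moving base point in `d/dt θ_{φ_t(w)}(J)`, so the pairing
is constant in `t`.
-/

open scoped RealInnerProductSpace
noncomputable section

def pmpField {n : ℕ} (H : EuclideanSpace ℝ (Fin n) × EuclideanSpace ℝ (Fin n) → ℝ)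
    (w : EuclideanSpace ℝ (Fin n) × EuclideanSpace ℝ (Fin n) × ℝ) :
    EuclideanSpace ℝ (Fin n) × EuclideanSpace ℝ (Fin n) × ℝ :=
  (gradient (fun q => H (w.1, q)) w.2.1,
   -gradient (fun y => H (y, w.2.1)) w.1,
   ⟪w.2.1, gradient (fun q => H (w.1, q)) w.2.1⟫ - H (w.1, w.2.1))

section PartialDerivatives

variable {W F : Type*} [NormedAddCommGroup W] [NormedSpace ℝ W]
  [NormedAddCommGroup F] [NormedSpace ℝ F] {φ : ℝ × W → F}

theorem hasFDerivAt_section {t : ℝ} {w : W} (hφ : DifferentiableAt ℝ φ (t, w)) :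
    HasFDerivAt (fun w' => φ (t, w')) ((fderiv ℝ φ (t, w)).comp (.inr ℝ ℝ W)) w :=
  hφ.hasFDerivAt.comp w (hasFDerivAt_prodMk_right t w)

theorem hasDerivAt_orbit {t : ℝ} {w : W} (hφ : DifferentiableAt ℝ φ (t, w)) :
    HasDerivAt (fun s => φ (s, w)) (fderiv ℝ φ (t, w) (1, 0)) t :=
  hφ.hasFDerivAt.comp_hasDerivAt t ((hasDerivAt_id t).prodMk (hasDerivAt_const t w))

theorem differentiable_deriv_orbit (hφ : ContDiff ℝ 2 φ) (t : ℝ) :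
    Differentiable ℝ (fun w => deriv (fun s => φ (s, w)) t) := by
  have hφd : Differentiable ℝ φ := hφ.differentiable (by norm_num)
  have hDφ : Differentiable ℝ (fderiv ℝ φ) :=
    (hφ.fderiv_right (m := 1) (by norm_num)).differentiable (by norm_num)
  simp only [fun w => (hasDerivAt_orbit (hφd (t, w))).deriv]
  exact fun w => (hasFDerivAt_section (hDφ (t, w))).differentiableAt.clm_apply
    (differentiableAt_const _)

theorem hasDerivAt_fderiv_section (hφ : ContDiff ℝ 2 φ) (t : ℝ) (w v : W) :
    HasDerivAt (fun s => fderiv ℝ (fun w' => φ (s, w')) w v)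
      (fderiv ℝ (fun w' => deriv (fun s => φ (s, w')) t) w v) t := by
  have hφd : Differentiable ℝ φ := hφ.differentiable (by norm_num)
  have hDφ : Differentiable ℝ (fderiv ℝ φ) :=
    (hφ.fderiv_right (m := 1) (by norm_num)).differentiable (by norm_num)
  have hsection : ∀ s, fderiv ℝ (fun w' => φ (s, w')) w v = fderiv ℝ φ (s, w) (0, v) := fun s => by
    rw [(hasFDerivAt_section (hφd (s, w))).fderiv]; rfl
  have horbit : ∀ w', deriv (fun s => φ (s, w')) t = fderiv ℝ φ (t, w') (1, 0) := fun w' =>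
    (hasDerivAt_orbit (hφd (t, w'))).deriv
  simp only [hsection, horbit]
  have hdt : HasDerivAt (fun s => fderiv ℝ φ (s, w) (0, v))
      (fderiv ℝ (fderiv ℝ φ) (t, w) (1, 0) (0, v)) t :=
    (ContinuousLinearMap.apply ℝ F ((0 : ℝ), v)).hasFDerivAt.comp_hasDerivAt t
      (hasDerivAt_orbit (hDφ (t, w)))
  have hdw : HasFDerivAt (fun w' => fderiv ℝ φ (t, w') (1, 0))
      ((ContinuousLinearMap.apply ℝ F ((1 : ℝ), (0 : W))).comp
        ((fderiv ℝ (fderiv ℝ φ) (t, w)).comp (.inr ℝ ℝ W))) w :=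
    (ContinuousLinearMap.apply ℝ F ((1 : ℝ), (0 : W))).hasFDerivAt.comp w
      (hasFDerivAt_section (hDφ (t, w)))
  rw [hdw.fderiv]
  convert hdt using 1
  exact (hφ.contDiffAt.isSymmSndFDerivAt (by simp)).eq (0, v) (1, 0)

end PartialDerivatives

section ContactForm

variable {E : Type*} [NormedAddCommGroup E] [InnerProductSpace ℝ E]

theorem fderiv_apply_eq_inner_partial_gradients [CompleteSpace E] {f : E × E → ℝ} {x p : E}
    (hf : DifferentiableAt ℝ f (x, p)) (a b : E) :
    fderiv ℝ f (x, p) (a, b)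
      = ⟪gradient (fun y => f (y, p)) x, a⟫ + ⟪gradient (fun q => f (x, q)) p, b⟫ := by
  have hx : HasFDerivAt (fun y => f (y, p)) ((fderiv ℝ f (x, p)).comp (.inl ℝ E E)) x :=
    hf.hasFDerivAt.comp x (hasFDerivAt_prodMk_left x p)
  have hp : HasFDerivAt (fun q => f (x, q)) ((fderiv ℝ f (x, p)).comp (.inr ℝ E E)) p :=
    hf.hasFDerivAt.comp p (hasFDerivAt_prodMk_right x p)
  rw [hx.hasGradientAt.gradient, hp.hasGradientAt.gradient, InnerProductSpace.toDual_symm_apply,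
    InnerProductSpace.toDual_symm_apply]
  simp [← map_add]

/-- The contact form `θ = dz − ⟨p, dx⟩` at the point `w`, evaluated on the tangent vector `v`. -/
def contactForm (w v : E × E × ℝ) : ℝ := v.2.2 - ⟪w.2.1, v.1⟫

theorem HasDerivAt.contactForm {γ J : ℝ → E × E × ℝ} {γ' J' : E × E × ℝ} {s : ℝ}
    (hγ : HasDerivAt γ γ' s) (hJ : HasDerivAt J J' s) :
    HasDerivAt (fun r => contactForm (γ r) (J r)) (contactForm (γ s) J' - ⟪γ'.2.1, (J s).1⟫) s := by
  have hp : HasDerivAt (fun r => (γ r).2.1) γ'.2.1 s := by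
    simpa using hγ.hasFDerivAt.snd.fst.hasDerivAt
  have hx : HasDerivAt (fun r => (J r).1) J'.1 s := by simpa using hJ.hasFDerivAt.fst.hasDerivAt
  have hz : HasDerivAt (fun r => (J r).2.2) J'.2.2 s := by
    simpa using hJ.hasFDerivAt.snd.snd.hasDerivAt
  have hθ : _root_.contactForm (γ s) J' - ⟪γ'.2.1, (J s).1⟫
      = J'.2.2 - (⟪(γ s).2.1, J'.1⟫ + ⟪γ'.2.1, (J s).1⟫) := by
    simp only [_root_.contactForm]
    ring
  rw [hθ]
  exact hz.sub (hp.inner ℝ hx)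

end ContactForm

section PMPFlow

variable {n : ℕ} {H : EuclideanSpace ℝ (Fin n) × EuclideanSpace ℝ (Fin n) → ℝ}

theorem contactForm_fderiv_pmpField_comp {G : Type*} [NormedAddCommGroup G] [NormedSpace ℝ G]
    {ψ : G → EuclideanSpace ℝ (Fin n) × EuclideanSpace ℝ (Fin n) × ℝ} {w : G}
    (hH : DifferentiableAt ℝ H ((ψ w).1, (ψ w).2.1)) (hψ : DifferentiableAt ℝ ψ w)
    (hX : DifferentiableAt ℝ (fun w' => pmpField H (ψ w')) w) (v : G) :
    contactForm (ψ w) (fderiv ℝ (fun w' => pmpField H (ψ w')) w v)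
      = ⟪(pmpField H (ψ w)).2.1, (fderiv ℝ ψ w v).1⟫ := by
  have hψ' := hψ.hasFDerivAt
  have hX' := hX.hasFDerivAt
  have hXz := hX'.snd.snd.unique
    ((hψ'.snd.fst.inner ℝ hX'.fst).sub (hH.hasFDerivAt.comp w (hψ'.fst.prodMk hψ'.snd.fst)))
  set X' := fderiv ℝ (fun w' => pmpField H (ψ w')) w v
  set ψ' := fderiv ℝ ψ w v
  have hXz' : X'.2.2 = ⟪(ψ w).2.1, X'.1⟫ + ⟪ψ'.2.1, (pmpField H (ψ w)).1⟫
      - fderiv ℝ H ((ψ w).1, (ψ w).2.1) (ψ'.1, ψ'.2.1) := by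
    simpa using DFunLike.congr_fun hXz v
  rw [fderiv_apply_eq_inner_partial_gradients hH] at hXz'
  simp only [contactForm, pmpField, inner_neg_left] at hXz' ⊢
  rw [real_inner_comm ψ'.2.1] at hXz'
  linarith

variable {φ : ℝ × (EuclideanSpace ℝ (Fin n) × EuclideanSpace ℝ (Fin n) × ℝ) →
  EuclideanSpace ℝ (Fin n) × EuclideanSpace ℝ (Fin n) × ℝ}

theorem hasDerivAt_contactForm_variation_pmpFlow (hH : Differentiable ℝ H)
    (hφ : ContDiff ℝ 2 φ)
    (hφflow : ∀ t w, HasDerivAt (fun s => φ (s, w)) (pmpField H (φ (t, w))) t)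
    (w v : EuclideanSpace ℝ (Fin n) × EuclideanSpace ℝ (Fin n) × ℝ) (t : ℝ) :
    HasDerivAt (fun s => contactForm (φ (s, w)) (fderiv ℝ (fun w' => φ (s, w')) w v)) 0 t := by
  have hX : (fun w' => deriv (fun s => φ (s, w')) t) = fun w' => pmpField H (φ (t, w')) :=
    funext fun w' => (hφflow t w').deriv
  have hvariation := hasDerivAt_fderiv_section hφ t w v
  have hXd := differentiable_deriv_orbit hφ t w
  rw [hX] at hvariation hXd
  have hψ := (hasFDerivAt_section ((hφ.differentiable (by norm_num)) (t, w))).differentiableAt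
  convert (hφflow t w).contactForm hvariation using 1
  rw [contactForm_fderiv_pmpField_comp (hH _) hψ hXd, sub_self]

theorem contactForm_variation_pmpFlow (hH : Differentiable ℝ H) (hφ : ContDiff ℝ 2 φ)
    (hφ0 : ∀ w, φ (0, w) = w)
    (hφflow : ∀ t w, HasDerivAt (fun s => φ (s, w)) (pmpField H (φ (t, w))) t)
    (t : ℝ) (w v : EuclideanSpace ℝ (Fin n) × EuclideanSpace ℝ (Fin n) × ℝ) :
    contactForm (φ (t, w)) (fderiv ℝ (fun w' => φ (t, w')) w v) = contactForm w v := by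
  have hderiv := hasDerivAt_contactForm_variation_pmpFlow hH hφ hφflow w v
  have hconst := is_const_of_deriv_eq_zero (fun s => (hderiv s).differentiableAt)
    (fun s => (hderiv s).deriv) t 0
  have hφ0' : (fun w' => φ (0, w')) = id := funext hφ0
  simpa [hφ0, hφ0'] using hconst

end PMPFlow

theorem pmp_flow_preserves_contact_form_general {n : ℕ}
    (H : EuclideanSpace ℝ (Fin n) × EuclideanSpace ℝ (Fin n) → ℝ)
    (hH : ContDiff ℝ 2 H)
    (φ : ℝ × (EuclideanSpace ℝ (Fin n) × EuclideanSpace ℝ (Fin n) × ℝ) →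
      EuclideanSpace ℝ (Fin n) × EuclideanSpace ℝ (Fin n) × ℝ)
    (hφ : ContDiff ℝ 2 φ)
    (hφ0 : ∀ w, φ (0, w) = w)
    (hφflow : ∀ t w, HasDerivAt (fun s => φ (s, w)) (pmpField H (φ (t, w))) t) :
    ∀ (t : ℝ) (w v : EuclideanSpace ℝ (Fin n) × EuclideanSpace ℝ (Fin n) × ℝ),
      fderiv ℝ (fun w' => (φ (t, w')).2.2) w v
          - ⟪(φ (t, w)).2.1, fderiv ℝ (fun w' => (φ (t, w')).1) w v⟫
        = v.2.2 - ⟪w.2.1, v.1⟫ := by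
  intro t w v
  have hsection := (hasFDerivAt_section ((hφ.differentiable (by norm_num)) (t, w))).differentiableAt
  rw [hsection.hasFDerivAt.snd.snd.fderiv, hsection.hasFDerivAt.fst.fderiv]
  exact contactForm_variation_pmpFlow (hH.differentiable (by norm_num)) hφ hφ0 hφflow t w v

/-- The PMP extended flow preserves the contact form `θ = dz − ⟨p, dx⟩` when the
Hamiltonian does not depend on the cost variable. -/
theorem pmp_flow_preserves_contact_form {n : ℕ} (hn : 1 ≤ n)
    (H : EuclideanSpace ℝ (Fin n) × EuclideanSpace ℝ (Fin n) → ℝ)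
    (hH : ContDiff ℝ 2 H)
    (φ : ℝ × (EuclideanSpace ℝ (Fin n) × EuclideanSpace ℝ (Fin n) × ℝ) →
      EuclideanSpace ℝ (Fin n) × EuclideanSpace ℝ (Fin n) × ℝ)
    (hφ : ContDiff ℝ 2 φ)
    (hφ0 : ∀ w, φ (0, w) = w)
    (hφflow : ∀ t w, HasDerivAt (fun s => φ (s, w)) (pmpField H (φ (t, w))) t) :
    ∀ (t : ℝ) (w v : EuclideanSpace ℝ (Fin n) × EuclideanSpace ℝ (Fin n) × ℝ),
      fderiv ℝ (fun w' => (φ (t, w')).2.2) w v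
          - ⟪(φ (t, w)).2.1, fderiv ℝ (fun w' => (φ (t, w')).1) w v⟫
        = v.2.2 - ⟪w.2.1, v.1⟫ :=
  pmp_flow_preserves_contact_form_general H hH φ hφ hφ0 hφflow
end
end
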